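/- arXiv:2308.11256 — 4 statements merged into one kernel-verified Lean document; each statement's English description precedes it below -/
import Mathlib

section
/- Let Z ⊆ ℝ^d be a nonempty compact set, let Z* ⊆ Z be a nonempty closed subset, and let F : Z → Z be a continuous map such that (i) F(z) = z for every z ∈ Z*, and (ii) for every z ∈ Z \ Z*, min_{z* ∈ Z*} ½‖z* − F(z)‖₂² < min_{z* ∈ Z*} ½‖z* − z‖₂². Then for every initial point z¹ ∈ Z, the sequence defined by z^{n+1} = F(z^n) converges to the set Z*, i.e. inf_{z* ∈ Z*} ‖z^n − z*‖₂ → 0 as n → ∞. -/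
/-!
The distance `V = infDist · Z*` is a Lyapunov function for `F`: since the minimal divergence is
`½ V²`, the hypothesis says exactly that `V ∘ F < V` off `Z*`, while `V ∘ F = V = 0` on `Z*`.
Along an orbit `V` therefore decreases to some limit `L`. A cluster point `w ∈ Z` of the orbit
(compactness) has `V w = L`, and by continuity of `F` also `V (F w) = L`; strict decrease then
forces `w ∈ Z*`, i.e. `L = 0`.
-/

open Metric Filter Set Topology

lemma sInf_image_half_norm_sub_sq {E : Type*} [SeminormedAddCommGroup E] [ProperSpace E]
    {S : Set E} (hS : IsClosed S) (hne : S.Nonempty) (z : E) :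
    sInf ((fun zs => (1 / 2 : ℝ) * ‖zs - z‖ ^ 2) '' S) = 1 / 2 * infDist z S ^ 2 := by
  refine IsLeast.csInf_eq ⟨?_, ?_⟩
  · obtain ⟨w, hwS, hw⟩ := hS.exists_infDist_eq_dist hne z
    exact ⟨w, hwS, by rw [hw, dist_comm, dist_eq_norm]⟩
  · rintro _ ⟨zs, hzs, rfl⟩
    have h : infDist z S ≤ ‖zs - z‖ := by
      simpa [dist_eq_norm, norm_sub_rev] using infDist_le_dist_of_mem (x := z) hzs
    dsimp only
    gcongr
    exact infDist_nonneg

lemma antitone_comp_iterate {X : Type*} {Z : Set X} {F : X → X} {V : X → ℝ}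
    (hmap : MapsTo F Z Z) (hle : ∀ z ∈ Z, V (F z) ≤ V z) {z : X} (hz : z ∈ Z) :
    Antitone fun n => V (F^[n] z) :=
  antitone_nat_of_succ_le fun n => by
    rw [Function.iterate_succ_apply']
    exact hle _ (hmap.iterate n hz)

lemma tendsto_comp_iterate_of_strict_lyapunov {X : Type*} [TopologicalSpace X]
    [FirstCountableTopology X] {Z : Set X} (hZ : IsCompact Z) {F : X → X} (hmap : MapsTo F Z Z)
    (hcont : ContinuousOn F Z) {V : X → ℝ} (hV : Continuous V) (hV0 : ∀ z, 0 ≤ V z)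
    (hle : ∀ z ∈ Z, V (F z) ≤ V z) (hlt : ∀ z ∈ Z, 0 < V z → V (F z) < V z)
    {z : X} (hz : z ∈ Z) :
    Tendsto (fun n => V (F^[n] z)) atTop (𝓝 0) := by
  have hanti := antitone_comp_iterate hmap hle hz
  set L := ⨅ n, V (F^[n] z)
  have hL : Tendsto (fun n => V (F^[n] z)) atTop (𝓝 L) :=
    tendsto_atTop_ciInf hanti ⟨0, by rintro _ ⟨n, rfl⟩; exact hV0 _⟩
  obtain ⟨w, hwZ, φ, hφ, hw⟩ := hZ.tendsto_subseq fun n => hmap.iterate n hz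
  have hVw : V w = L := tendsto_nhds_unique ((hV.tendsto w).comp hw) (hL.comp hφ.tendsto_atTop)
  have hVFw : V (F w) = L := by
    have hFw : Tendsto (fun k => F (F^[φ k] z)) atTop (𝓝 (F w)) :=
      (hcont w hwZ).tendsto.comp
        (tendsto_nhdsWithin_iff.mpr ⟨hw, .of_forall fun k => hmap.iterate _ hz⟩)
    have hshift : Tendsto (fun k => φ k + 1) atTop atTop :=
      tendsto_add_atTop_nat 1 |>.comp hφ.tendsto_atTop
    refine tendsto_nhds_unique ((hV.tendsto (F w)).comp hFw) ?_
    simpa only [Function.comp_def, Function.iterate_succ_apply'] using hL.comp hshift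
  suffices hL0 : L = 0 from hL0 ▸ hL
  by_contra hL0
  have hpos : 0 < V w := hVw ▸ ((hV0 w).trans_eq hVw).lt_of_ne' hL0
  exact (hlt w hwZ hpos).ne (hVFw.trans hVw.symm)

theorem rt_fixed_point_iteration_converges_to_set_general
    (d : ℕ) (Z Zstar : Set (EuclideanSpace ℝ (Fin d)))
    (hZcomp : IsCompact Z)
    (hZsne : Zstar.Nonempty) (hZscl : IsClosed Zstar)
    (F : EuclideanSpace ℝ (Fin d) → EuclideanSpace ℝ (Fin d))
    (hmap : Set.MapsTo F Z Z) (hcont : ContinuousOn F Z)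
    (hfix : ∀ z ∈ Zstar, F z = z)
    (hdec : ∀ z ∈ Z \ Zstar,
      sInf ((fun zs => (1 / 2) * ‖zs - F z‖ ^ 2) '' Zstar) <
      sInf ((fun zs => (1 / 2) * ‖zs - z‖ ^ 2) '' Zstar))
    (z1 : EuclideanSpace ℝ (Fin d)) (hz1 : z1 ∈ Z)
    (seq : ℕ → EuclideanSpace ℝ (Fin d))
    (hseq0 : seq 0 = z1)
    (hseqrec : ∀ n, seq (n + 1) = F (seq n)) :
    Filter.Tendsto (fun n => Metric.infDist (seq n) Zstar) Filter.atTop (nhds 0) := by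
  have hlt : ∀ z ∈ Z, 0 < infDist z Zstar → infDist (F z) Zstar < infDist z Zstar := by
    intro z hz hpos
    have h := hdec z ⟨hz, (hZscl.notMem_iff_infDist_pos hZsne).mpr hpos⟩
    simp only [sInf_image_half_norm_sub_sq hZscl hZsne] at h
    exact lt_of_pow_lt_pow_left₀ 2 infDist_nonneg (by linarith)
  have hle : ∀ z ∈ Z, infDist (F z) Zstar ≤ infDist z Zstar := by
    intro z hz
    rcases (infDist_nonneg (x := z) (s := Zstar)).eq_or_lt with h0 | hpos
    · rw [hfix z ((hZscl.mem_iff_infDist_zero hZsne).mpr h0.symm)]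
    · exact (hlt z hz hpos).le
  have hseq : seq = fun n => F^[n] z1 := funext fun n => by
    induction n with
    | zero => exact hseq0
    | succ n ih => rw [hseqrec, ih, Function.iterate_succ_apply']
  rw [hseq]
  exact tendsto_comp_iterate_of_strict_lyapunov hZcomp hmap hcont (continuous_infDist_pt Zstar)
    (fun _ => infDist_nonneg) hle hlt hz1

/-- If `F : Z → Z` is continuous on a nonempty compact `Z ⊆ ℝ^d`,
fixes the nonempty closed subset `Z* ⊆ Z` pointwise, and strictly decreases the
minimal (Euclidean) Bregman divergence `½‖z* − ·‖₂²` to `Z*` off `Z*`, then every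
iterate sequence `z^{n+1} = F(z^n)` converges to the set `Z*`. -/
theorem rt_fixed_point_iteration_converges_to_set
    (d : ℕ) (Z Zstar : Set (EuclideanSpace ℝ (Fin d)))
    (hZne : Z.Nonempty) (hZcomp : IsCompact Z)
    (hsub : Zstar ⊆ Z) (hZsne : Zstar.Nonempty) (hZscl : IsClosed Zstar)
    (F : EuclideanSpace ℝ (Fin d) → EuclideanSpace ℝ (Fin d))
    (hmap : Set.MapsTo F Z Z) (hcont : ContinuousOn F Z)
    (hfix : ∀ z ∈ Zstar, F z = z)
    (hdec : ∀ z ∈ Z \ Zstar,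
      sInf ((fun zs => (1 / 2) * ‖zs - F z‖ ^ 2) '' Zstar) <
      sInf ((fun zs => (1 / 2) * ‖zs - z‖ ^ 2) '' Zstar))
    (z1 : EuclideanSpace ℝ (Fin d)) (hz1 : z1 ∈ Z)
    (seq : ℕ → EuclideanSpace ℝ (Fin d))
    (hseq0 : seq 0 = z1)
    (hseqrec : ∀ n, seq (n + 1) = F (seq n)) :
    Filter.Tendsto (fun n => Metric.infDist (seq n) Zstar) Filter.atTop (nhds 0) :=
  rt_fixed_point_iteration_converges_to_set_general d Z Zstar hZcomp hZsne hZscl F hmap hcont hfix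
    hdec z1 hz1 seq hseq0 hseqrec
end

section
/- Let μ > 0, let r = (r₀, r₁) ∈ Δ_m × Δ_n, and let (x*, y*) be a saddle point of the regularized objective f_r on Δ_m × Δ_n. Then for every Nash equilibrium (x̄, ȳ) of the original game, ½‖x̄ − x*‖₂² + ½‖ȳ − y*‖₂² ≤ ( ½‖x̄ − r₀‖₂² + ½‖ȳ − r₁‖₂² ) − ( ½‖x* − r₀‖₂² + ½‖y* − r₁‖₂² ). -/
open Finset

/-- Squared Euclidean norm of a vector in `ℝ^d`. -/
noncomputable def sqnorm {d : ℕ} (v : Fin d → ℝ) : ℝ := ∑ i, (v i) ^ 2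

/-- Euclidean norm `‖·‖₂` of a vector in `ℝ^d`. -/
noncomputable def enorm2 {d : ℕ} (v : Fin d → ℝ) : ℝ := Real.sqrt (sqnorm v)

/-- Euclidean inner product on `ℝ^d`. -/
noncomputable def ip {d : ℕ} (u v : Fin d → ℝ) : ℝ := ∑ i, u i * v i

/-- The max-player's payoff `⟨x, A y⟩` in the two-player zero-sum game with payoff matrix `A`. -/
noncomputable def pay {m n : ℕ} (A : Matrix (Fin m) (Fin n) ℝ)
    (x : Fin m → ℝ) (y : Fin n → ℝ) : ℝ := ip x (A.mulVec y)

/-- `(x, y)` is a Nash equilibrium of the zero-sum game with payoff matrix `A`: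
`⟨x, A y'⟩ ≤ ⟨x, A y⟩ ≤ ⟨x', A y⟩` for all `x' ∈ Δ_m`, `y' ∈ Δ_n`. -/
def IsNE {m n : ℕ} (A : Matrix (Fin m) (Fin n) ℝ)
    (x : Fin m → ℝ) (y : Fin n → ℝ) : Prop :=
  x ∈ stdSimplex ℝ (Fin m) ∧ y ∈ stdSimplex ℝ (Fin n) ∧
  ∀ x' ∈ stdSimplex ℝ (Fin m), ∀ y' ∈ stdSimplex ℝ (Fin n),
    pay A x y' ≤ pay A x y ∧ pay A x y ≤ pay A x' y

/-- The regularized objective `f_r(x,y) = ⟨x, A y⟩ + (μ/2)‖x − r₀‖₂² − (μ/2)‖y − r₁‖₂²`. -/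
noncomputable def freg {m n : ℕ} (A : Matrix (Fin m) (Fin n) ℝ) (μ : ℝ)
    (r₀ : Fin m → ℝ) (r₁ : Fin n → ℝ) (x : Fin m → ℝ) (y : Fin n → ℝ) : ℝ :=
  pay A x y + (μ / 2) * sqnorm (x - r₀) - (μ / 2) * sqnorm (y - r₁)

/-- `(xs, ys)` is a saddle point of `f_r` on `Δ_m × Δ_n`. -/
def IsSaddle {m n : ℕ} (A : Matrix (Fin m) (Fin n) ℝ) (μ : ℝ)
    (r₀ : Fin m → ℝ) (r₁ : Fin n → ℝ) (xs : Fin m → ℝ) (ys : Fin n → ℝ) : Prop :=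
  xs ∈ stdSimplex ℝ (Fin m) ∧ ys ∈ stdSimplex ℝ (Fin n) ∧
  ∀ x ∈ stdSimplex ℝ (Fin m), ∀ y ∈ stdSimplex ℝ (Fin n),
    freg A μ r₀ r₁ xs y ≤ freg A μ r₀ r₁ xs ys ∧
    freg A μ r₀ r₁ xs ys ≤ freg A μ r₀ r₁ x ys

/-!
Each half of a saddle point of `f_r` minimises a linear function plus `(μ/2)‖· − r‖²` over its
simplex (for `y*`, after negating `f_r`), and such a minimiser `z` satisfies the quadratic
growth bound `g z + (μ/2)‖x − z‖² ≤ g x` on the whole simplex (first-order optimality plus the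
exact expansion of the quadratic). Applying this at `x̄` and at `ȳ` and adding, the bilinear
terms combine to `⟨x̄, A y*⟩ − ⟨x*, A ȳ⟩`, which is `≤ 0` by the equilibrium inequalities at
`(x̄, ȳ)`.
-/

open Filter Topology Matrix

lemma nonneg_of_forall_mem_Ioc_nonneg_add_mul {a b : ℝ}
    (h : ∀ t ∈ Set.Ioc (0 : ℝ) 1, 0 ≤ a + t * b) : 0 ≤ a := by
  have hlim : Tendsto (fun t : ℝ => a + t * b) (𝓝[>] 0) (𝓝 a) := by
    have hcont : Continuous fun t : ℝ => a + t * b := by fun_prop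
    simpa using (hcont.tendsto 0).mono_left nhdsWithin_le_nhds
  exact ge_of_tendsto hlim (eventually_of_mem (Ioc_mem_nhdsGT one_pos) h)

section Prox

variable {d : ℕ}

lemma ip_eq_dotProduct (u v : Fin d → ℝ) : ip u v = u ⬝ᵥ v := rfl

noncomputable def proxObjective (μ : ℝ) (v r x : Fin d → ℝ) : ℝ :=
  ip x v + μ / 2 * sqnorm (x - r)

lemma proxObjective_add_smul_sub (μ : ℝ) (v r x z : Fin d → ℝ) (t : ℝ) :
    proxObjective μ v r (z + t • (x - z)) =
      proxObjective μ v r z + t * (ip (x - z) (v + μ • (z - r)) +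
        t * (μ / 2 * sqnorm (x - z))) := by
  simp only [proxObjective, ip, sqnorm, Pi.add_apply, Pi.sub_apply, Pi.smul_apply, smul_eq_mul,
    mul_sum, ← sum_add_distrib]
  exact sum_congr rfl fun i _ => by ring

lemma proxObjective_add_half_mul_sqnorm_le_of_isMinOn {μ : ℝ} {v r z x : Fin d → ℝ}
    {S : Set (Fin d → ℝ)} (hS : Convex ℝ S) (hz : z ∈ S)
    (hmin : IsMinOn (proxObjective μ v r) S z) (hx : x ∈ S) :
    proxObjective μ v r z + μ / 2 * sqnorm (x - z) ≤ proxObjective μ v r x := by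
  -- first-order optimality: the directional derivative towards `x` is nonnegative
  have hderiv : 0 ≤ ip (x - z) (v + μ • (z - r)) := by
    refine nonneg_of_forall_mem_Ioc_nonneg_add_mul (b := μ / 2 * sqnorm (x - z)) fun t ht => ?_
    have hzt := hmin (hS.add_smul_sub_mem hz hx (Set.Ioc_subset_Icc_self ht))
    rw [Set.mem_ofPred_eq, proxObjective_add_smul_sub] at hzt
    exact nonneg_of_mul_nonneg_right (by linarith) ht.1
  have hone := proxObjective_add_smul_sub μ v r x z 1
  rw [one_smul, add_sub_cancel] at hone
  linarith

end Prox

section Saddle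

variable {m n : ℕ} {A : Matrix (Fin m) (Fin n) ℝ} {μ : ℝ} {r₀ : Fin m → ℝ} {r₁ : Fin n → ℝ}
  {xs : Fin m → ℝ} {ys : Fin n → ℝ}

lemma proxObjective_mulVec (μ : ℝ) (A : Matrix (Fin m) (Fin n) ℝ) (r x : Fin m → ℝ)
    (y : Fin n → ℝ) : proxObjective μ (A *ᵥ y) r x = pay A x y + μ / 2 * sqnorm (x - r) := rfl

lemma proxObjective_neg_vecMul (μ : ℝ) (A : Matrix (Fin m) (Fin n) ℝ) (x : Fin m → ℝ)
    (r y : Fin n → ℝ) :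
    proxObjective μ (-(x ᵥ* A)) r y = -pay A x y + μ / 2 * sqnorm (y - r) := by
  rw [proxObjective, pay, ip_eq_dotProduct, ip_eq_dotProduct, dotProduct_neg, dotProduct_mulVec,
    dotProduct_comm]

lemma IsSaddle.isMinOn_left (h : IsSaddle A μ r₀ r₁ xs ys) :
    IsMinOn (proxObjective μ (A *ᵥ ys) r₀) (stdSimplex ℝ (Fin m)) xs := fun x hx => by
  have hle := (h.2.2 x hx ys h.2.1).2
  rw [Set.mem_ofPred_eq, proxObjective_mulVec, proxObjective_mulVec]
  simp only [freg] at hle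
  linarith

lemma IsSaddle.isMinOn_right (h : IsSaddle A μ r₀ r₁ xs ys) :
    IsMinOn (proxObjective μ (-(xs ᵥ* A)) r₁) (stdSimplex ℝ (Fin n)) ys := fun y hy => by
  have hle := (h.2.2 xs h.1 y hy).1
  rw [Set.mem_ofPred_eq, proxObjective_neg_vecMul, proxObjective_neg_vecMul]
  simp only [freg] at hle
  linarith

end Saddle

theorem saddle_point_decreases_bregman_to_NE_general
    (m n : ℕ) (A : Matrix (Fin m) (Fin n) ℝ)
    (μ : ℝ) (hμ : 0 < μ)
    (r₀ : Fin m → ℝ) (r₁ : Fin n → ℝ)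
    (xs : Fin m → ℝ) (ys : Fin n → ℝ) (hsaddle : IsSaddle A μ r₀ r₁ xs ys)
    (xb : Fin m → ℝ) (yb : Fin n → ℝ) (hNE : IsNE A xb yb) :
    (1 / 2) * sqnorm (xb - xs) + (1 / 2) * sqnorm (yb - ys) ≤
      ((1 / 2) * sqnorm (xb - r₀) + (1 / 2) * sqnorm (yb - r₁)) -
      ((1 / 2) * sqnorm (xs - r₀) + (1 / 2) * sqnorm (ys - r₁)) := by
  obtain ⟨hxb, hyb, hne⟩ := hNE
  have hx := proxObjective_add_half_mul_sqnorm_le_of_isMinOn (convex_stdSimplex ℝ (Fin m))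
    hsaddle.1 hsaddle.isMinOn_left hxb
  have hy := proxObjective_add_half_mul_sqnorm_le_of_isMinOn (convex_stdSimplex ℝ (Fin n))
    hsaddle.2.1 hsaddle.isMinOn_right hyb
  rw [proxObjective_mulVec, proxObjective_mulVec] at hx
  rw [proxObjective_neg_vecMul, proxObjective_neg_vecMul] at hy
  obtain ⟨hne_y, hne_x⟩ := hne xs hsaddle.1 ys hsaddle.2.1
  refine le_of_mul_le_mul_left ?_ hμ
  linarith

/-- if `(x*, y*)` is a saddle point of the regularized objective `f_r`, then for
every Nash equilibrium `(x̄, ȳ)` of the original game,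
`½‖x̄ − x*‖² + ½‖ȳ − y*‖² ≤ (½‖x̄ − r₀‖² + ½‖ȳ − r₁‖²) − (½‖x* − r₀‖² + ½‖y* − r₁‖²)`. -/
theorem saddle_point_decreases_bregman_to_NE
    (m n : ℕ) (hm : 1 ≤ m) (hn : 1 ≤ n) (A : Matrix (Fin m) (Fin n) ℝ)
    (μ : ℝ) (hμ : 0 < μ)
    (r₀ : Fin m → ℝ) (r₁ : Fin n → ℝ)
    (hr₀ : r₀ ∈ stdSimplex ℝ (Fin m)) (hr₁ : r₁ ∈ stdSimplex ℝ (Fin n))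
    (xs : Fin m → ℝ) (ys : Fin n → ℝ) (hsaddle : IsSaddle A μ r₀ r₁ xs ys)
    (xb : Fin m → ℝ) (yb : Fin n → ℝ) (hNE : IsNE A xb yb) :
    (1 / 2) * sqnorm (xb - xs) + (1 / 2) * sqnorm (yb - ys) ≤
      ((1 / 2) * sqnorm (xb - r₀) + (1 / 2) * sqnorm (yb - r₁)) -
      ((1 / 2) * sqnorm (xs - r₀) + (1 / 2) * sqnorm (ys - r₁)) :=
  saddle_point_decreases_bregman_to_NE_general m n A μ hμ r₀ r₁ xs ys hsaddle xb yb hNE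
end

section
/- Let μ > 0, let r = (r₀, r₁) ∈ Δ_m × Δ_n, assume the set Z* of Nash equilibria is nonempty, and let (x*, y*) be a saddle point of the regularized objective f_r on Δ_m × Δ_n. If r ∉ Z*, then min over (x̄, ȳ) ∈ Z* of ( ½‖x̄ − x*‖₂² + ½‖ȳ − y*‖₂² ) is strictly smaller than min over (x̄, ȳ) ∈ Z* of ( ½‖x̄ − r₀‖₂² + ½‖ȳ − r₁‖₂² ). -/
open Finset

section Aux

lemma sqnorm_nonneg' {d : ℕ} (v : Fin d → ℝ) : 0 ≤ sqnorm v :=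
  Finset.sum_nonneg fun _ _ => sq_nonneg _

lemma sqnorm_pos' {d : ℕ} {v : Fin d → ℝ} (hv : v ≠ 0) : 0 < sqnorm v := by
  rcases Function.ne_iff.1 hv with ⟨i, hi⟩
  have h1 : (0:ℝ) < v i ^ 2 := by
    have : v i ≠ 0 := hi
    positivity
  have h2 : v i ^ 2 ≤ sqnorm v :=
    Finset.single_le_sum (f := fun j => (v j)^2) (fun j _ => sq_nonneg _) (Finset.mem_univ i)
  linarith

lemma sqnorm_add' {d : ℕ} (u v : Fin d → ℝ) :
    sqnorm (u + v) = sqnorm u + 2 * ip u v + sqnorm v := by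
  simp only [sqnorm, ip, Pi.add_apply, Finset.mul_sum, ← Finset.sum_add_distrib]
  exact Finset.sum_congr rfl fun i _ => by ring

lemma ip_smul_right' {d : ℕ} (u v : Fin d → ℝ) (t : ℝ) : ip u (t • v) = t * ip u v := by
  simp only [ip, Pi.smul_apply, smul_eq_mul, Finset.mul_sum]
  exact Finset.sum_congr rfl fun i _ => by ring

lemma ip_smul_left' {d : ℕ} (u v : Fin d → ℝ) (t : ℝ) : ip (t • u) v = t * ip u v := by
  simp only [ip, Pi.smul_apply, smul_eq_mul, Finset.mul_sum]
  exact Finset.sum_congr rfl fun i _ => by ring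

lemma sqnorm_smul' {d : ℕ} (v : Fin d → ℝ) (t : ℝ) : sqnorm (t • v) = t^2 * sqnorm v := by
  simp only [sqnorm, Pi.smul_apply, smul_eq_mul, Finset.mul_sum]
  exact Finset.sum_congr rfl fun i _ => by ring

lemma ip_add_left' {d : ℕ} (u v w : Fin d → ℝ) : ip (u + v) w = ip u w + ip v w := by
  simp only [ip, Pi.add_apply, ← Finset.sum_add_distrib]
  exact Finset.sum_congr rfl fun i _ => by ring

lemma ip_sub_left' {d : ℕ} (u v w : Fin d → ℝ) : ip (u - v) w = ip u w - ip v w := by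
  simp only [ip, Pi.sub_apply, ← Finset.sum_sub_distrib]
  exact Finset.sum_congr rfl fun i _ => by ring

lemma ip_add_right' {d : ℕ} (u v w : Fin d → ℝ) : ip u (v + w) = ip u v + ip u w := by
  simp only [ip, Pi.add_apply, ← Finset.sum_add_distrib]
  exact Finset.sum_congr rfl fun i _ => by ring

lemma ip_sub_right' {d : ℕ} (u v w : Fin d → ℝ) : ip u (v - w) = ip u v - ip u w := by
  simp only [ip, Pi.sub_apply, ← Finset.sum_sub_distrib]
  exact Finset.sum_congr rfl fun i _ => by ring

lemma ip_zero_left' {d : ℕ} (v : Fin d → ℝ) : ip 0 v = 0 := by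
  simp [ip]

lemma small_t' {D K : ℝ} (h : ∀ t : ℝ, 0 < t → t ≤ 1 → D ≤ K * t) : D ≤ 0 := by
  by_contra hD
  push_neg at hD
  have hK : 0 < K := by
    have h1 := h 1 one_pos le_rfl
    nlinarith
  have ht : 0 < D / (2 * K) := by positivity
  rcases le_or_gt (D / (2*K)) 1 with hle | hgt
  · have h2 := h _ ht hle
    have h3 : K * (D / (2 * K)) = D / 2 := by field_simp
    linarith
  · have h2 := h 1 one_pos le_rfl
    have h3 : D / (2*K) ≤ 1 := by
      rw [div_le_one (by positivity)]
      linarith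
    linarith

lemma pay_first {m n : ℕ} (A : Matrix (Fin m) (Fin n) ℝ) (xs d : Fin m → ℝ)
    (y : Fin n → ℝ) (t : ℝ) :
    pay A (xs + t • d) y = pay A xs y + t * pay A d y := by
  simp [pay, ip_add_left', ip_smul_left']

lemma pay_second {m n : ℕ} (A : Matrix (Fin m) (Fin n) ℝ) (x : Fin m → ℝ)
    (ys d : Fin n → ℝ) (t : ℝ) :
    pay A x (ys + t • d) = pay A x ys + t * pay A x d := by
  simp only [pay, Matrix.mulVec_add, Matrix.mulVec_smul, ip_add_right', ip_smul_right']

lemma pay_sub_first {m n : ℕ} (A : Matrix (Fin m) (Fin n) ℝ) (u v : Fin m → ℝ)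
    (y : Fin n → ℝ) : pay A (u - v) y = pay A u y - pay A v y := by
  simp [pay, ip_sub_left']

lemma pay_sub_second {m n : ℕ} (A : Matrix (Fin m) (Fin n) ℝ) (x : Fin m → ℝ)
    (u v : Fin n → ℝ) : pay A x (u - v) = pay A x u - pay A x v := by
  simp only [pay, Matrix.mulVec_sub, ip_sub_right']

lemma seg_mem {d : ℕ} {a b : Fin d → ℝ} (ha : a ∈ stdSimplex ℝ (Fin d))
    (hb : b ∈ stdSimplex ℝ (Fin d)) {t : ℝ} (ht0 : 0 < t) (ht1 : t ≤ 1) :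
    a + t • (b - a) ∈ stdSimplex ℝ (Fin d) := by
  have hco := (convex_stdSimplex ℝ (Fin d)) ha hb
    (by linarith : (0:ℝ) ≤ 1 - t) (le_of_lt ht0) (by ring)
  have : a + t • (b - a) = (1 - t) • a + t • b := by
    funext i
    simp only [Pi.add_apply, Pi.smul_apply, Pi.sub_apply, smul_eq_mul]
    ring
  rw [this]
  exact hco

lemma VI_x {m n : ℕ} {A : Matrix (Fin m) (Fin n) ℝ} {μ : ℝ} (hμ : 0 < μ)
    {r₀ : Fin m → ℝ} {r₁ : Fin n → ℝ} {xs : Fin m → ℝ} {ys : Fin n → ℝ}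
    (hsaddle : IsSaddle A μ r₀ r₁ xs ys) (xb : Fin m → ℝ)
    (hxb : xb ∈ stdSimplex ℝ (Fin m)) :
    0 ≤ (pay A xb ys - pay A xs ys) + μ * ip (xs - r₀) (xb - xs) := by
  obtain ⟨hxs, hys, hsp⟩ := hsaddle
  have key : ∀ t : ℝ, 0 < t → t ≤ 1 →
      -((pay A xb ys - pay A xs ys) + μ * ip (xs - r₀) (xb - xs)) ≤
        ((μ/2) * sqnorm (xb - xs)) * t := by
    intro t ht0 ht1
    have hz : xs + t • (xb - xs) ∈ stdSimplex ℝ (Fin m) := seg_mem hxs hxb ht0 ht1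
    have hineq := (hsp _ hz ys hys).2
    unfold freg at hineq
    rw [pay_first] at hineq
    have hsub : xs + t • (xb - xs) - r₀ = (xs - r₀) + t • (xb - xs) := by
      funext i
      simp only [Pi.add_apply, Pi.sub_apply, Pi.smul_apply, smul_eq_mul]
      ring
    rw [hsub, sqnorm_add', ip_smul_right', sqnorm_smul', pay_sub_first] at hineq
    have h4 : 0 ≤ t * ((pay A xb ys - pay A xs ys) + μ * ip (xs - r₀) (xb - xs)
        + (μ/2) * t * sqnorm (xb - xs)) := by nlinarith
    have h5 : 0 ≤ (pay A xb ys - pay A xs ys) + μ * ip (xs - r₀) (xb - xs)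
        + (μ/2) * t * sqnorm (xb - xs) := by
      by_contra hc
      push_neg at hc
      nlinarith
    linarith
  have := small_t' key
  linarith

lemma VI_y {m n : ℕ} {A : Matrix (Fin m) (Fin n) ℝ} {μ : ℝ} (hμ : 0 < μ)
    {r₀ : Fin m → ℝ} {r₁ : Fin n → ℝ} {xs : Fin m → ℝ} {ys : Fin n → ℝ}
    (hsaddle : IsSaddle A μ r₀ r₁ xs ys) (yb : Fin n → ℝ)
    (hyb : yb ∈ stdSimplex ℝ (Fin n)) :
    0 ≤ (pay A xs ys - pay A xs yb) + μ * ip (ys - r₁) (yb - ys) := by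
  obtain ⟨hxs, hys, hsp⟩ := hsaddle
  have key : ∀ t : ℝ, 0 < t → t ≤ 1 →
      -((pay A xs ys - pay A xs yb) + μ * ip (ys - r₁) (yb - ys)) ≤
        ((μ/2) * sqnorm (yb - ys)) * t := by
    intro t ht0 ht1
    have hz : ys + t • (yb - ys) ∈ stdSimplex ℝ (Fin n) := seg_mem hys hyb ht0 ht1
    have hineq := (hsp xs hxs _ hz).1
    unfold freg at hineq
    rw [pay_second] at hineq
    have hsub : ys + t • (yb - ys) - r₁ = (ys - r₁) + t • (yb - ys) := by
      funext i
      simp only [Pi.add_apply, Pi.sub_apply, Pi.smul_apply, smul_eq_mul]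
      ring
    rw [hsub, sqnorm_add', ip_smul_right', sqnorm_smul', pay_sub_second] at hineq
    have h4 : 0 ≤ t * ((pay A xs ys - pay A xs yb) + μ * ip (ys - r₁) (yb - ys)
        + (μ/2) * t * sqnorm (yb - ys)) := by nlinarith
    have h5 : 0 ≤ (pay A xs ys - pay A xs yb) + μ * ip (ys - r₁) (yb - ys)
        + (μ/2) * t * sqnorm (yb - ys) := by
      by_contra hc
      push_neg at hc
      nlinarith
    linarith
  have := small_t' key
  linarith

end Aux

theorem saddle_point_strictly_decreases_min_bregman_to_NE
    (m n : ℕ) (hm : 1 ≤ m) (hn : 1 ≤ n) (A : Matrix (Fin m) (Fin n) ℝ)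
    (μ : ℝ) (hμ : 0 < μ)
    (r₀ : Fin m → ℝ) (r₁ : Fin n → ℝ)
    (hr₀ : r₀ ∈ stdSimplex ℝ (Fin m)) (hr₁ : r₁ ∈ stdSimplex ℝ (Fin n))
    (hNEne : ∃ p : (Fin m → ℝ) × (Fin n → ℝ), IsNE A p.1 p.2)
    (xs : Fin m → ℝ) (ys : Fin n → ℝ) (hsaddle : IsSaddle A μ r₀ r₁ xs ys)
    (hrnotNE : ¬ IsNE A r₀ r₁) :
    sInf ((fun p : (Fin m → ℝ) × (Fin n → ℝ) =>
        (1 / 2) * sqnorm (p.1 - xs) + (1 / 2) * sqnorm (p.2 - ys)) ''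
        {p | IsNE A p.1 p.2}) <
    sInf ((fun p : (Fin m → ℝ) × (Fin n → ℝ) =>
        (1 / 2) * sqnorm (p.1 - r₀) + (1 / 2) * sqnorm (p.2 - r₁)) ''
        {p | IsNE A p.1 p.2}) := by
  obtain ⟨hxs, hys, hsp⟩ := hsaddle
  have hsad : IsSaddle A μ r₀ r₁ xs ys := ⟨hxs, hys, hsp⟩
  -- (xs, ys) ≠ (r₀, r₁), else r would be a NE
  have hne : ¬ (xs = r₀ ∧ ys = r₁) := by
    rintro ⟨hx, hy⟩
    apply hrnotNE
    refine ⟨hr₀, hr₁, fun x' hx' y' hy' => ⟨?_, ?_⟩⟩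
    · have := VI_y hμ hsad y' hy'
      rw [hx, hy, sub_self, ip_zero_left'] at this
      linarith
    · have := VI_x hμ hsad x' hx'
      rw [hx, hy, sub_self, ip_zero_left'] at this
      linarith
  -- positive gap
  set c₀ : ℝ := sqnorm (xs - r₀) + sqnorm (ys - r₁) with hc₀
  have hc₀pos : 0 < c₀ := by
    rcases not_and_or.1 hne with h | h
    · have : xs - r₀ ≠ 0 := sub_ne_zero_of_ne h
      have := sqnorm_pos' this
      have := sqnorm_nonneg' (ys - r₁)
      simp only [hc₀]; linarith
    · have : ys - r₁ ≠ 0 := sub_ne_zero_of_ne h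
      have := sqnorm_pos' this
      have := sqnorm_nonneg' (xs - r₀)
      simp only [hc₀]; linarith
  -- pointwise inequality for every NE
  have pointwise : ∀ p : (Fin m → ℝ) × (Fin n → ℝ), IsNE A p.1 p.2 →
      (1 / 2) * sqnorm (p.1 - xs) + (1 / 2) * sqnorm (p.2 - ys) + c₀ / 2 ≤
      (1 / 2) * sqnorm (p.1 - r₀) + (1 / 2) * sqnorm (p.2 - r₁) := by
    rintro ⟨xb, yb⟩ ⟨hxb, hyb, hNE⟩
    have hVx := VI_x hμ hsad xb hxb
    have hVy := VI_y hμ hsad yb hyb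
    have hNE1 := (hNE xs hxs ys hys).1  -- pay A xb ys ≤ pay A xb yb
    have hNE2 := (hNE xs hxs ys hys).2  -- pay A xb yb ≤ pay A xs yb
    have hipsum : 0 ≤ ip (xs - r₀) (xb - xs) + ip (ys - r₁) (yb - ys) := by
      by_contra hc
      push_neg at hc
      nlinarith
    have ex : sqnorm (xb - r₀) = sqnorm (xs - r₀) + 2 * ip (xs - r₀) (xb - xs)
        + sqnorm (xb - xs) := by
      have h : xb - r₀ = (xs - r₀) + (xb - xs) := by abel
      rw [h, sqnorm_add']
    have ey : sqnorm (yb - r₁) = sqnorm (ys - r₁) + 2 * ip (ys - r₁) (yb - ys)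
        + sqnorm (yb - ys) := by
      have h : yb - r₁ = (ys - r₁) + (yb - ys) := by abel
      rw [h, sqnorm_add']
    simp only [hc₀]
    linarith
  -- inf comparison
  obtain ⟨p₀, hp₀⟩ := hNEne
  set S : Set ((Fin m → ℝ) × (Fin n → ℝ)) := {p | IsNE A p.1 p.2} with hS
  set g₁ : ((Fin m → ℝ) × (Fin n → ℝ)) → ℝ := fun p =>
    (1 / 2) * sqnorm (p.1 - xs) + (1 / 2) * sqnorm (p.2 - ys) with hg₁
  set g₂ : ((Fin m → ℝ) × (Fin n → ℝ)) → ℝ := fun p =>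
    (1 / 2) * sqnorm (p.1 - r₀) + (1 / 2) * sqnorm (p.2 - r₁) with hg₂
  have hSne : S.Nonempty := ⟨p₀, hp₀⟩
  have hbdd : BddBelow (g₁ '' S) := by
    refine ⟨0, ?_⟩
    rintro a ⟨p, hp, rfl⟩
    have h1 := sqnorm_nonneg' (p.1 - xs)
    have h2 := sqnorm_nonneg' (p.2 - ys)
    simp only [hg₁]
    linarith
  have hle : sInf (g₁ '' S) + c₀ / 2 ≤ sInf (g₂ '' S) := by
    apply le_csInf (hSne.image g₂)
    rintro b ⟨p, hp, rfl⟩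
    have h1 : sInf (g₁ '' S) ≤ g₁ p := csInf_le hbdd ⟨p, hp, rfl⟩
    have h2 := pointwise p hp
    simp only [hg₁, hg₂] at h1 h2 ⊢
    linarith
  linarith
end

section
/- Let μ > 0, let r = (r₀, r₁) and r′ = (r₀′, r₁′) be two reference profiles in Δ_m × Δ_n, and let (x*, y*) and (x*′, y*′) be saddle points on Δ_m × Δ_n of the regularized objectives f_r and f_{r′}, respectively. Then ‖x*′ − x*‖₂² + ‖y*′ − y*‖₂² ≤ ⟨r₀′ − r₀, x*′ − x*⟩ + ⟨r₁′ − r₁, y*′ − y*⟩; in particular ‖(x*′, y*′) − (x*, y*)‖₂ ≤ ‖(r₀′, r₁′) − (r₀, r₁)‖₂, so the map F sending a reference profile r to the unique saddle point of f_r is continuous on Δ_m × Δ_n. -/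
open Finset

lemma nonneg_of_scale (D c : ℝ) (hc : 0 ≤ c)
    (h : ∀ t : ℝ, 0 < t → t ≤ 1 → 0 ≤ t * D + t ^ 2 * c) : 0 ≤ D := by
  by_contra hD
  push_neg at hD
  rcases eq_or_lt_of_le hc with hc0 | hc0
  · have h1 := h 1 one_pos le_rfl
    nlinarith
  · have ht0 : 0 < min 1 (-D / (2 * c)) := lt_min one_pos (div_pos (by linarith) (by linarith))
    have h1 := h _ ht0 (min_le_left _ _)
    have ht2 : min 1 (-D / (2 * c)) ≤ -D / (2 * c) := min_le_right _ _
    have h2 : min 1 (-D / (2 * c)) * (2 * c) ≤ -D := by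
      rwa [le_div_iff₀ (by positivity)] at ht2
    nlinarith [mul_le_mul_of_nonneg_left h2 ht0.le, mul_neg_of_pos_of_neg ht0 hD]

lemma ip_add_smul_left {d : ℕ} (a v w : Fin d → ℝ) (t : ℝ) :
    ip (a + t • v) w = ip a w + t * ip v w := by
  simp only [ip, Pi.add_apply, Pi.smul_apply, smul_eq_mul, Finset.mul_sum,
    ← Finset.sum_add_distrib]
  exact Finset.sum_congr rfl fun i _ => by ring

lemma ip_add_smul_right {d : ℕ} (w a v : Fin d → ℝ) (t : ℝ) :
    ip w (a + t • v) = ip w a + t * ip w v := by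
  simp only [ip, Pi.add_apply, Pi.smul_apply, smul_eq_mul, Finset.mul_sum,
    ← Finset.sum_add_distrib]
  exact Finset.sum_congr rfl fun i _ => by ring

lemma sqnorm_shift {d : ℕ} (a v r : Fin d → ℝ) (t : ℝ) :
    sqnorm (a + t • v - r) = sqnorm (a - r) + 2 * t * ip (a - r) v + t ^ 2 * sqnorm v := by
  simp only [sqnorm, ip, Pi.add_apply, Pi.sub_apply, Pi.smul_apply, smul_eq_mul,
    Finset.mul_sum, ← Finset.sum_add_distrib]
  exact Finset.sum_congr rfl fun i _ => by ring

lemma mem_simplex_seg {d : ℕ} {a v : Fin d → ℝ} (ha : a ∈ stdSimplex ℝ (Fin d))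
    (hv : v ∈ stdSimplex ℝ (Fin d)) {t : ℝ} (ht0 : 0 ≤ t) (ht1 : t ≤ 1) :
    a + t • (v - a) ∈ stdSimplex ℝ (Fin d) := by
  have h := (convex_stdSimplex ℝ (Fin d)) ha hv (by linarith : (0:ℝ) ≤ 1 - t) ht0 (by ring)
  convert h using 1
  ext i
  simp only [Pi.add_apply, Pi.smul_apply, Pi.sub_apply, smul_eq_mul]
  ring

lemma foc_min {m n : ℕ} (A : Matrix (Fin m) (Fin n) ℝ) {μ : ℝ} (hμ : 0 < μ)
    {r₀ : Fin m → ℝ} {r₁ : Fin n → ℝ} {xs : Fin m → ℝ} {ys : Fin n → ℝ}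
    (hs : IsSaddle A μ r₀ r₁ xs ys) {v : Fin m → ℝ} (hv : v ∈ stdSimplex ℝ (Fin m)) :
    0 ≤ ip (v - xs) (A.mulVec ys) + μ * ip (xs - r₀) (v - xs) := by
  obtain ⟨hxs, hys, hmin⟩ := hs
  apply nonneg_of_scale _ ((μ / 2) * sqnorm (v - xs))
    (mul_nonneg (by positivity) (sqnorm_nonneg' _))
  intro t ht0 ht1
  have hmem := mem_simplex_seg hxs hv ht0.le ht1
  have h2 := (hmin _ hmem ys hys).2
  have hexp : freg A μ r₀ r₁ (xs + t • (v - xs)) ys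
      = freg A μ r₀ r₁ xs ys
        + (t * (ip (v - xs) (A.mulVec ys) + μ * ip (xs - r₀) (v - xs))
          + t ^ 2 * ((μ / 2) * sqnorm (v - xs))) := by
    simp only [freg, pay, ip_add_smul_left, sqnorm_shift]
    ring
  rw [hexp] at h2
  linarith

lemma foc_max {m n : ℕ} (A : Matrix (Fin m) (Fin n) ℝ) {μ : ℝ} (hμ : 0 < μ)
    {r₀ : Fin m → ℝ} {r₁ : Fin n → ℝ} {xs : Fin m → ℝ} {ys : Fin n → ℝ}
    (hs : IsSaddle A μ r₀ r₁ xs ys) {w : Fin n → ℝ} (hw : w ∈ stdSimplex ℝ (Fin n)) :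
    0 ≤ -(ip xs (A.mulVec (w - ys))) + μ * ip (ys - r₁) (w - ys) := by
  obtain ⟨hxs, hys, hmin⟩ := hs
  apply nonneg_of_scale _ ((μ / 2) * sqnorm (w - ys)) (mul_nonneg (by positivity) (sqnorm_nonneg' _))
  intro t ht0 ht1
  have hmem := mem_simplex_seg hys hw ht0.le ht1
  have h2 := (hmin xs hxs _ hmem).1
  have hexp : freg A μ r₀ r₁ xs (ys + t • (w - ys))
      = freg A μ r₀ r₁ xs ys
        - (t * (-(ip xs (A.mulVec (w - ys))) + μ * ip (ys - r₁) (w - ys))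
          + t ^ 2 * ((μ / 2) * sqnorm (w - ys))) := by
    have hmv : A.mulVec (ys + t • (w - ys)) = A.mulVec ys + t • A.mulVec (w - ys) := by
      rw [Matrix.mulVec_add, Matrix.mulVec_smul]
    simp only [freg, pay, hmv, ip_add_smul_right, sqnorm_shift]
    ring
  rw [hexp] at h2
  linarith

lemma saddle_key {m n : ℕ} (A : Matrix (Fin m) (Fin n) ℝ) {μ : ℝ} (hμ : 0 < μ)
    {r₀ r₀' : Fin m → ℝ} {r₁ r₁' : Fin n → ℝ}
    {xs : Fin m → ℝ} {ys : Fin n → ℝ} (hs : IsSaddle A μ r₀ r₁ xs ys)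
    {xs' : Fin m → ℝ} {ys' : Fin n → ℝ} (hs' : IsSaddle A μ r₀' r₁' xs' ys') :
    sqnorm (xs' - xs) + sqnorm (ys' - ys) ≤
      ip (r₀' - r₀) (xs' - xs) + ip (r₁' - r₁) (ys' - ys) := by
  have h1 := foc_min A hμ hs hs'.1
  have h2 := foc_min A hμ hs' hs.1
  have h3 := foc_max A hμ hs hs'.2.1
  have h4 := foc_max A hμ hs' hs.2.1
  have e1 : ip (xs' - xs) (A.mulVec ys) + ip (xs - xs') (A.mulVec ys')
      = ip (xs' - xs) (A.mulVec (ys - ys')) := by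
    simp only [ip, Matrix.mulVec_sub, Pi.sub_apply, ← Finset.sum_add_distrib]
    exact Finset.sum_congr rfl fun i _ => by ring
  have e2 : ip xs (A.mulVec (ys' - ys)) + ip xs' (A.mulVec (ys - ys'))
      = ip (xs' - xs) (A.mulVec (ys - ys')) := by
    simp only [ip, Matrix.mulVec_sub, Pi.sub_apply, ← Finset.sum_add_distrib]
    exact Finset.sum_congr rfl fun i _ => by ring
  have e3 : ip (xs - r₀) (xs' - xs) + ip (xs' - r₀') (xs - xs')
      = ip (r₀' - r₀) (xs' - xs) - sqnorm (xs' - xs) := by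
    simp only [ip, sqnorm, Pi.sub_apply, ← Finset.sum_add_distrib, ← Finset.sum_sub_distrib]
    exact Finset.sum_congr rfl fun i _ => by ring
  have e4 : ip (ys - r₁) (ys' - ys) + ip (ys' - r₁') (ys - ys')
      = ip (r₁' - r₁) (ys' - ys) - sqnorm (ys' - ys) := by
    simp only [ip, sqnorm, Pi.sub_apply, ← Finset.sum_add_distrib, ← Finset.sum_sub_distrib]
    exact Finset.sum_congr rfl fun i _ => by ring
  have hEq : (ip (xs' - xs) (A.mulVec ys) + μ * ip (xs - r₀) (xs' - xs))
      + (ip (xs - xs') (A.mulVec ys') + μ * ip (xs' - r₀') (xs - xs'))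
      + (-(ip xs (A.mulVec (ys' - ys))) + μ * ip (ys - r₁) (ys' - ys))
      + (-(ip xs' (A.mulVec (ys - ys'))) + μ * ip (ys' - r₁') (ys - ys'))
      = μ * (ip (r₀' - r₀) (xs' - xs) + ip (r₁' - r₁) (ys' - ys)
          - sqnorm (xs' - xs) - sqnorm (ys' - ys)) := by
    linear_combination e1 - e2 + μ * e3 + μ * e4
  have key : 0 ≤ μ * (ip (r₀' - r₀) (xs' - xs) + ip (r₁' - r₁) (ys' - ys)
      - sqnorm (xs' - xs) - sqnorm (ys' - ys)) := by
    rw [← hEq]; linarith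
  nlinarith [key, hμ]

lemma saddle_sqrt_bound {m n : ℕ} (A : Matrix (Fin m) (Fin n) ℝ) {μ : ℝ} (hμ : 0 < μ)
    {r₀ r₀' : Fin m → ℝ} {r₁ r₁' : Fin n → ℝ}
    {xs : Fin m → ℝ} {ys : Fin n → ℝ} (hs : IsSaddle A μ r₀ r₁ xs ys)
    {xs' : Fin m → ℝ} {ys' : Fin n → ℝ} (hs' : IsSaddle A μ r₀' r₁' xs' ys') :
    Real.sqrt (sqnorm (xs' - xs) + sqnorm (ys' - ys)) ≤
      Real.sqrt (sqnorm (r₀' - r₀) + sqnorm (r₁' - r₁)) := by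
  set S := sqnorm (xs' - xs) + sqnorm (ys' - ys) with hSdef
  set T := sqnorm (r₀' - r₀) + sqnorm (r₁' - r₁) with hTdef
  have hS : 0 ≤ S := add_nonneg (sqnorm_nonneg' _) (sqnorm_nonneg' _)
  have hT : 0 ≤ T := add_nonneg (sqnorm_nonneg' _) (sqnorm_nonneg' _)
  have ha : S ≤ ip (r₀' - r₀) (xs' - xs) + ip (r₁' - r₁) (ys' - ys) :=
    saddle_key A hμ hs hs'
  have cs : (ip (r₀' - r₀) (xs' - xs) + ip (r₁' - r₁) (ys' - ys)) ^ 2 ≤ T * S := by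
    have h := Finset.sum_mul_sq_le_sq_mul_sq Finset.univ
      (Sum.elim (r₀' - r₀) (r₁' - r₁)) (Sum.elim (xs' - xs) (ys' - ys))
    simpa [Fintype.sum_sum_type, ip, sqnorm, hSdef, hTdef] using h
  have hST : S ≤ T := by
    rcases eq_or_lt_of_le hS with h0 | h0
    · linarith
    · nlinarith [cs, ha, h0, mul_self_le_mul_self hS ha]
  exact Real.sqrt_le_sqrt hST

lemma dist_le_sqrt_sqnorm {d : ℕ} (a b : Fin d → ℝ) :
    dist a b ≤ Real.sqrt (sqnorm (a - b)) := by
  rw [dist_pi_le_iff (Real.sqrt_nonneg _)]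
  intro i
  have h1 : (a i - b i) ^ 2 ≤ sqnorm (a - b) := by
    have := Finset.single_le_sum (f := fun j => ((a - b) j) ^ 2)
      (fun j _ => sq_nonneg _) (Finset.mem_univ i)
    simpa [sqnorm] using this
  calc dist (a i) (b i) = Real.sqrt ((a i - b i) ^ 2) := by
        rw [Real.dist_eq, Real.sqrt_sq_eq_abs]
    _ ≤ _ := Real.sqrt_le_sqrt h1

lemma sqnorm_le_card_dist {d : ℕ} (a b : Fin d → ℝ) :
    sqnorm (a - b) ≤ d * (dist a b) ^ 2 := by
  have hb : ∀ i : Fin d, ((a - b) i) ^ 2 ≤ (dist a b) ^ 2 := by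
    intro i
    have h0 : |a i - b i| ≤ dist a b := by
      have := dist_le_pi_dist a b i
      rwa [Real.dist_eq] at this
    have : ((a - b) i) ^ 2 = |a i - b i| ^ 2 := by rw [Pi.sub_apply, sq_abs]
    rw [this]
    exact pow_le_pow_left₀ (abs_nonneg _) h0 2
  calc sqnorm (a - b) ≤ ∑ _i : Fin d, (dist a b) ^ 2 :=
        Finset.sum_le_sum fun i _ => hb i
    _ = d * (dist a b) ^ 2 := by
        simp [Finset.sum_const, Finset.card_univ, nsmul_eq_mul]

/-- if `(x*, y*)` and `(x*′, y*′)` are saddle points of `f_r` and `f_{r′}`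
respectively, then `‖x*′ − x*‖² + ‖y*′ − y*‖² ≤ ⟨r₀′ − r₀, x*′ − x*⟩ + ⟨r₁′ − r₁, y*′ − y*⟩`,
hence `‖(x*′,y*′) − (x*,y*)‖₂ ≤ ‖(r₀′,r₁′) − (r₀,r₁)‖₂`; consequently any map `F` sending a
reference profile to a saddle point of the corresponding regularized objective is continuous
on `Δ_m × Δ_n`. -/
theorem saddle_point_map_nonexpansive_and_continuous
    (m n : ℕ) (hm : 1 ≤ m) (hn : 1 ≤ n) (A : Matrix (Fin m) (Fin n) ℝ)
    (μ : ℝ) (hμ : 0 < μ)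
    (r₀ r₀' : Fin m → ℝ) (r₁ r₁' : Fin n → ℝ)
    (hr₀ : r₀ ∈ stdSimplex ℝ (Fin m)) (hr₁ : r₁ ∈ stdSimplex ℝ (Fin n))
    (hr₀' : r₀' ∈ stdSimplex ℝ (Fin m)) (hr₁' : r₁' ∈ stdSimplex ℝ (Fin n))
    (xs : Fin m → ℝ) (ys : Fin n → ℝ) (hsaddle : IsSaddle A μ r₀ r₁ xs ys)
    (xs' : Fin m → ℝ) (ys' : Fin n → ℝ) (hsaddle' : IsSaddle A μ r₀' r₁' xs' ys') :
    (sqnorm (xs' - xs) + sqnorm (ys' - ys) ≤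
        ip (r₀' - r₀) (xs' - xs) + ip (r₁' - r₁) (ys' - ys)) ∧
    (Real.sqrt (sqnorm (xs' - xs) + sqnorm (ys' - ys)) ≤
        Real.sqrt (sqnorm (r₀' - r₀) + sqnorm (r₁' - r₁))) ∧
    (∀ F : (Fin m → ℝ) × (Fin n → ℝ) → (Fin m → ℝ) × (Fin n → ℝ),
      (∀ p ∈ stdSimplex ℝ (Fin m) ×ˢ stdSimplex ℝ (Fin n),
        IsSaddle A μ p.1 p.2 (F p).1 (F p).2) →
      ContinuousOn F (stdSimplex ℝ (Fin m) ×ˢ stdSimplex ℝ (Fin n))) := by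
  refine ⟨saddle_key A hμ hsaddle hsaddle', saddle_sqrt_bound A hμ hsaddle hsaddle', ?_⟩
  intro F hF
  have hlip : LipschitzOnWith (Real.toNNReal (Real.sqrt (m + n))) F
      (stdSimplex ℝ (Fin m) ×ˢ stdSimplex ℝ (Fin n)) := by
    rw [lipschitzOnWith_iff_dist_le_mul]
    intro p hp q hq
    have hFp := hF p hp
    have hFq := hF q hq
    have key := saddle_sqrt_bound A hμ hFp hFq
    have d1 : dist (F p).1 (F q).1 ≤
        Real.sqrt (sqnorm ((F q).1 - (F p).1) + sqnorm ((F q).2 - (F p).2)) := by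
      rw [dist_comm]
      exact (dist_le_sqrt_sqnorm _ _).trans (Real.sqrt_le_sqrt
        (by linarith [sqnorm_nonneg' ((F q).2 - (F p).2)]))
    have d2 : dist (F p).2 (F q).2 ≤
        Real.sqrt (sqnorm ((F q).1 - (F p).1) + sqnorm ((F q).2 - (F p).2)) := by
      rw [dist_comm]
      exact (dist_le_sqrt_sqnorm _ _).trans (Real.sqrt_le_sqrt
        (by linarith [sqnorm_nonneg' ((F q).1 - (F p).1)]))
    have hdF : dist (F p) (F q) ≤ Real.sqrt (sqnorm (q.1 - p.1) + sqnorm (q.2 - p.2)) := by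
      rw [Prod.dist_eq]
      exact max_le (d1.trans key) (d2.trans key)
    have hc1 : dist q.1 p.1 ≤ dist p q := by
      rw [dist_comm p q, Prod.dist_eq]; exact le_max_left _ _
    have hc2 : dist q.2 p.2 ≤ dist p q := by
      rw [dist_comm p q, Prod.dist_eq]; exact le_max_right _ _
    have hsq1 : (dist q.1 p.1) ^ 2 ≤ (dist p q) ^ 2 :=
      pow_le_pow_left₀ dist_nonneg hc1 2
    have hsq2 : (dist q.2 p.2) ^ 2 ≤ (dist p q) ^ 2 :=
      pow_le_pow_left₀ dist_nonneg hc2 2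
    have hT : sqnorm (q.1 - p.1) + sqnorm (q.2 - p.2) ≤ ((m : ℝ) + n) * (dist p q) ^ 2 := by
      have hm1 := sqnorm_le_card_dist q.1 p.1
      have hn1 := sqnorm_le_card_dist q.2 p.2
      have h1 : (m : ℝ) * (dist q.1 p.1) ^ 2 ≤ (m : ℝ) * (dist p q) ^ 2 :=
        mul_le_mul_of_nonneg_left hsq1 (by positivity)
      have h2 : (n : ℝ) * (dist q.2 p.2) ^ 2 ≤ (n : ℝ) * (dist p q) ^ 2 :=
        mul_le_mul_of_nonneg_left hsq2 (by positivity)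
      calc sqnorm (q.1 - p.1) + sqnorm (q.2 - p.2)
          ≤ (m : ℝ) * (dist p q) ^ 2 + (n : ℝ) * (dist p q) ^ 2 := by
            linarith
        _ = ((m : ℝ) + n) * (dist p q) ^ 2 := by ring
    have hfinal : Real.sqrt (sqnorm (q.1 - p.1) + sqnorm (q.2 - p.2)) ≤
        Real.sqrt ((m : ℝ) + n) * dist p q := by
      have h := Real.sqrt_le_sqrt hT
      rwa [Real.sqrt_mul (by positivity), Real.sqrt_sq dist_nonneg] at h
    rw [Real.coe_toNNReal _ (Real.sqrt_nonneg _)]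
    have : Real.sqrt ((m : ℝ) + n) = Real.sqrt ((m + n : ℕ) : ℝ) := by push_cast; ring_nf
    exact hdF.trans (hfinal.trans_eq (by push_cast; ring_nf))
  exact hlip.continuousOn
end
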